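/- Let S be an inverse semigroup with zero and let A be an order ideal of S. Then the set A^∨ of all joins of finite nonempty compatible subsets of A (where such joins exist) is an order ideal closed under joins of finite nonempty compatible subsets, provided S is a distributive inverse semigroup. -/

import Mathlib

namespace InvPaper

/-- An inverse semigroup: a regular semigroup whose idempotents commute
(equivalently, each element has a unique generalized inverse `sinv`). -/
class InverseSemigroup (S : Type*) extends Semigroup S where
  sinv : S → S
  mul_sinv_mul : ∀ a : S, a * sinv a * a = a
  sinv_mul_sinv : ∀ a : S, sinv a * a * sinv a = sinv a
  idem_comm : ∀ e f : S, e * e = e → f * f = f → e * f = f * e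

open InverseSemigroup

variable {S : Type*}

section Basic
variable [InverseSemigroup S]

/-- `e` is an idempotent. -/
def idem (e : S) : Prop := e * e = e

/-- The natural partial order: `a ≤ b` iff `a = b * e` for some idempotent `e`. -/
def nle (a b : S) : Prop := ∃ e : S, idem e ∧ a = b * e

/-- `s` and `t` are compatible: `s⁻¹t` and `st⁻¹` are idempotents. -/
def compatible (s t : S) : Prop := idem (sinv s * t) ∧ idem (s * sinv t)

/-- `j` is the join (least upper bound) of `a` and `b` w.r.t. the natural partial order. -/
def isJoin (a b j : S) : Prop :=
  nle a j ∧ nle b j ∧ ∀ c : S, nle a c → nle b c → nle j c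

/-- `m` is the meet (greatest lower bound) of `a` and `b`. -/
def isMeet (a b m : S) : Prop :=
  nle m a ∧ nle m b ∧ ∀ z : S, nle z a → nle z b → nle z m

/-- `j` is the least upper bound of the set `A`. -/
def isJoinSet (A : Set S) (j : S) : Prop :=
  (∀ a ∈ A, nle a j) ∧ ∀ c : S, (∀ a ∈ A, nle a c) → nle j c

/-- A filter: a nonempty, downward-directed, upward-closed subset. -/
def IsFilter (F : Set S) : Prop :=
  F.Nonempty ∧ (∀ a ∈ F, ∀ b ∈ F, ∃ c ∈ F, nle c a ∧ nle c b) ∧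
    ∀ a ∈ F, ∀ b : S, nle a b → b ∈ F

/-- An order ideal: a downward-closed subset. -/
def IsOrderIdeal (A : Set S) : Prop := ∀ x ∈ A, ∀ y : S, nle y x → y ∈ A

end Basic

/-- An inverse semigroup with a (multiplicative) zero element. -/
class InverseSemigroupWithZero (S : Type*) extends InverseSemigroup S, Zero S where
  zmul : ∀ a : S, 0 * a = 0
  mulz : ∀ a : S, a * 0 = 0

section WithZero
variable [InverseSemigroupWithZero S]

/-- A proper filter: a filter not containing `0`. -/
def IsProperFilter (F : Set S) : Prop := IsFilter F ∧ (0 : S) ∉ F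

/-- An ultrafilter: a maximal proper filter. -/
def IsUltrafilter (F : Set S) : Prop :=
  IsProperFilter F ∧ ∀ G : Set S, IsProperFilter G → F ⊆ G → G = F

/-- A prime filter: a proper filter `F` such that whenever a join `a ∨ b` exists and
lies in `F`, then `a ∈ F` or `b ∈ F`. -/
def IsPrimeFilter (F : Set S) : Prop :=
  IsProperFilter F ∧ ∀ a b j : S, isJoin a b j → j ∈ F → a ∈ F ∨ b ∈ F

/-- `d(F) = (F⁻¹F)↑`, the upward closure of `{a⁻¹b : a, b ∈ F}`. -/
def dClosure (F : Set S) : Set S :=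
  {x | ∃ a ∈ F, ∃ b ∈ F, nle (InverseSemigroup.sinv a * b) x}

/-- `r(F) = (FF⁻¹)↑`, the upward closure of `{ab⁻¹ : a, b ∈ F}`. -/
def rClosure (F : Set S) : Set S :=
  {x | ∃ a ∈ F, ∃ b ∈ F, nle (a * InverseSemigroup.sinv b) x}

/-- The product of two filters: `F · G = (FG)↑`. -/
def filterMul (F G : Set S) : Set S :=
  {x | ∃ a ∈ F, ∃ b ∈ G, nle (a * b) x}

/-- `A` is ∨-closed: closed under existing joins of finite nonempty compatible subsets. -/
def IsVeeClosed (A : Set S) : Prop :=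
  ∀ Y : Finset S, Y.Nonempty → ↑Y ⊆ A → (∀ a ∈ Y, ∀ b ∈ Y, compatible a b) →
    ∀ j : S, isJoinSet (↑Y : Set S) j → j ∈ A

/-- The ∨-closure `A^∨`: all existing joins of finite nonempty compatible subsets of `A`. -/
def veeClosure (A : Set S) : Set S :=
  {x | ∃ Y : Finset S, Y.Nonempty ∧ ↑Y ⊆ A ∧ (∀ a ∈ Y, ∀ b ∈ Y, compatible a b) ∧
    isJoinSet (↑Y : Set S) x}

/-- A prime order ideal: if every common lower bound of `a` and `b` lies in `P`,
then `a ∈ P` or `b ∈ P`. -/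
def IsPrimeOrderIdeal (P : Set S) : Prop :=
  ∀ a b : S, (∀ z : S, nle z a → nle z b → z ∈ P) → a ∈ P ∨ b ∈ P

/-- The set of prime filters containing `s`. -/
def Xset (s : S) : Set (Set S) := {F | IsPrimeFilter F ∧ s ∈ F}

end WithZero

/-- A distributive inverse semigroup: compatible pairs have joins and
multiplication distributes over these joins. -/
class DistributiveInverseSemigroup (S : Type*) extends InverseSemigroupWithZero S where
  joins_exist : ∀ a b : S, compatible a b → ∃ j : S, isJoin a b j
  mul_distrib_left : ∀ a b j c : S, compatible a b → isJoin a b j →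
    isJoin (c * a) (c * b) (c * j)
  mul_distrib_right : ∀ a b j c : S, compatible a b → isJoin a b j →
    isJoin (a * c) (b * c) (j * c)

/-- A distributive inverse semigroup is Boolean if its idempotents form a generalized
Boolean algebra: relative complements of idempotents exist. -/
def IsBoolean (S : Type*) [DistributiveInverseSemigroup S] : Prop :=
  ∀ e f : S, idem e → idem f → nle e f →
    ∃ g : S, idem g ∧ e * g = 0 ∧ isJoin e g f

/-- A pseudogroup: an inverse semigroup with joins of all nonempty compatible subsets,
over which multiplication distributes. -/
class Pseudogroup (S : Type*) extends InverseSemigroup S where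
  joins_exist : ∀ A : Set S, A.Nonempty → (∀ a ∈ A, ∀ b ∈ A, compatible a b) →
    ∃ j : S, isJoinSet A j
  mul_distrib_left : ∀ (A : Set S) (j c : S), isJoinSet A j →
    isJoinSet ((c * ·) '' A) (c * j)
  mul_distrib_right : ∀ (A : Set S) (j c : S), isJoinSet A j →
    isJoinSet ((· * c) '' A) (j * c)


/-!
Any two elements below a common upper bound are compatible, so `A^∨` is just the set of joins
of finite nonempty subsets of `A`, and all order-theoretic bookkeeping can be done with `IsLUB`
for the natural partial order. A join of joins of finite subsets of `A` is the join of their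
(finite) union, so `A^∨` is ∨-closed. If `y ≤ ⋁ Y` then `y = (⋁ Y) e` for an idempotent `e`,
and distributivity, extended to finite joins by induction, gives `y = ⋁ {b e | b ∈ Y}`, a join
of elements of the order ideal `A`.
-/

theorem _root_.IsLUB.isLUB_insert_iff {α : Type*} [Preorder α] {s : Set α} {a j' j : α}
    (hs : IsLUB s j') : IsLUB (insert a s) j ↔ IsLUB {a, j'} j := by
  refine isLUB_congr ?_
  rw [upperBounds_insert, upperBounds_insert, hs.upperBounds_eq, upperBounds_singleton]

section NaturalOrder
variable [InverseSemigroup S]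

theorem idem_mul {e f : S} (he : idem e) (hf : idem f) : idem (e * f) :=
  calc e * f * (e * f) = e * (f * e) * f := by simp only [mul_assoc]
    _ = e * e * (f * f) := by rw [idem_comm f e hf he]; simp only [mul_assoc]
    _ = e * f := by rw [he, hf]

theorem idem_sinv_mul_self (a : S) : idem (sinv a * a) :=
  calc sinv a * a * (sinv a * a) = sinv a * a * sinv a * a := by simp only [mul_assoc]
    _ = sinv a * a := by rw [sinv_mul_sinv]

theorem idem_mul_sinv_self (a : S) : idem (a * sinv a) :=
  calc a * sinv a * (a * sinv a) = a * sinv a * a * sinv a := by simp only [mul_assoc]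
    _ = a * sinv a := by rw [mul_sinv_mul]

theorem idem_conj {g : S} (hg : idem g) (c : S) : idem (c * g * sinv c) :=
  calc c * g * sinv c * (c * g * sinv c) = c * (g * (sinv c * c)) * g * sinv c := by
        simp only [mul_assoc]
    _ = c * sinv c * c * (g * g) * sinv c := by
        rw [idem_comm g _ hg (idem_sinv_mul_self c)]; simp only [mul_assoc]
    _ = c * g * sinv c := by rw [mul_sinv_mul, hg]

theorem eq_sinv_of_mul_mul {a x : S} (hax : a * x * a = a) (hxa : x * a * x = x) :
    x = sinv a := by
  have hxa_idem : idem (x * a) := by unfold idem; rw [← mul_assoc, hxa]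
  have hax_idem : idem (a * x) := by unfold idem; rw [← mul_assoc, hax]
  calc x = x * (a * sinv a * a) * x := by rw [mul_sinv_mul, hxa]
    _ = x * a * (sinv a * a) * x := by simp only [mul_assoc]
    _ = sinv a * a * (x * a * x) := by
        rw [idem_comm _ _ hxa_idem (idem_sinv_mul_self a)]; simp only [mul_assoc]
    _ = sinv a * (a * x) := by rw [hxa, mul_assoc]
    _ = sinv a * a * sinv a * (a * x) := by rw [sinv_mul_sinv]
    _ = sinv a * ((a * x) * (a * sinv a)) := by
        rw [idem_comm _ _ hax_idem (idem_mul_sinv_self a)]; simp only [mul_assoc]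
    _ = sinv a * (a * x * a) * sinv a := by simp only [mul_assoc]
    _ = sinv a := by rw [hax, sinv_mul_sinv]

theorem sinv_mul (a b : S) : sinv (a * b) = sinv b * sinv a := by
  have hcomm := idem_comm _ _ (idem_mul_sinv_self b) (idem_sinv_mul_self a)
  refine (eq_sinv_of_mul_mul ?_ ?_).symm
  · calc a * b * (sinv b * sinv a) * (a * b) = a * (b * sinv b * (sinv a * a)) * b := by
          simp only [mul_assoc]
      _ = a * sinv a * a * (b * sinv b * b) := by rw [hcomm]; simp only [mul_assoc]
      _ = a * b := by rw [mul_sinv_mul, mul_sinv_mul]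
  · calc sinv b * sinv a * (a * b) * (sinv b * sinv a)
          = sinv b * (sinv a * a * (b * sinv b)) * sinv a := by simp only [mul_assoc]
      _ = sinv b * b * sinv b * (sinv a * a * sinv a) := by
          rw [← hcomm]; simp only [mul_assoc]
      _ = sinv b * sinv a := by rw [sinv_mul_sinv, sinv_mul_sinv]

theorem sinv_of_idem {e : S} (he : idem e) : sinv e = e :=
  (eq_sinv_of_mul_mul (x := e) (by rw [he, he]) (by rw [he, he])).symm

theorem nle_refl (a : S) : nle a a :=
  ⟨sinv a * a, idem_sinv_mul_self a, by rw [← mul_assoc, mul_sinv_mul]⟩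

theorem nle_trans {a b c : S} (hab : nle a b) (hbc : nle b c) : nle a c := by
  obtain ⟨e, he, rfl⟩ := hab
  obtain ⟨f, hf, rfl⟩ := hbc
  exact ⟨f * e, idem_mul hf he, mul_assoc c f e⟩

theorem nle_antisymm {a b : S} (hab : nle a b) (hba : nle b a) : a = b := by
  obtain ⟨e, he, rfl⟩ := hab
  obtain ⟨f, hf, hb⟩ := hba
  have hbf : b * f = b := by rw [hb, mul_assoc _ f f, hf]
  calc b * e = b * f * e := by rw [hbf]
    _ = b * e * f := by rw [mul_assoc, ← idem_comm e f he hf, ← mul_assoc]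
    _ = b := hb.symm

abbrev natPartialOrder : PartialOrder S where
  le := nle
  le_refl := nle_refl
  le_trans _ _ _ := nle_trans
  le_antisymm _ _ := nle_antisymm

end NaturalOrder

section

attribute [local instance] natPartialOrder

theorem isJoinSet_iff_isLUB [InverseSemigroup S] {s : Set S} {j : S} :
    isJoinSet s j ↔ IsLUB s j :=
  Iff.rfl

theorem isJoin_iff_isLUB [InverseSemigroup S] {a b j : S} : isJoin a b j ↔ IsLUB {a, b} j := by
  simp only [isJoin, IsLUB, IsLeast, upperBounds_insert, upperBounds_singleton, mem_lowerBounds,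
    Set.mem_inter_iff, Set.mem_Ici, and_imp, and_assoc]
  rfl

theorem compatible_of_le [InverseSemigroup S] {a b c : S} (hac : a ≤ c) (hbc : b ≤ c) :
    compatible a b := by
  obtain ⟨e, he, rfl⟩ := hac
  obtain ⟨f, hf, rfl⟩ := hbc
  constructor
  · rw [sinv_mul, sinv_of_idem he, mul_assoc, ← mul_assoc (sinv c)]
    exact idem_mul he (idem_mul (idem_sinv_mul_self c) hf)
  · rw [sinv_mul, sinv_of_idem hf, mul_assoc, ← mul_assoc e, ← mul_assoc]
    exact idem_conj (idem_mul he hf) c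

theorem exists_isLUB_finset_of_bddAbove [DistributiveInverseSemigroup S] {Y : Finset S}
    (hY : Y.Nonempty) (hbdd : BddAbove (Y : Set S)) : ∃ j, IsLUB (Y : Set S) j := by
  obtain ⟨u, hu⟩ := hbdd
  induction hY using Finset.Nonempty.cons_induction with
  | singleton a => exact ⟨a, by simp [isLUB_singleton]⟩
  | cons a Y _ hY ih =>
    rw [Finset.coe_cons, upperBounds_insert] at hu
    obtain ⟨j', hj'⟩ := ih hu.2
    have hau : a ≤ u := hu.1
    obtain ⟨j, hj⟩ := DistributiveInverseSemigroup.joins_exist a j'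
      (compatible_of_le hau (hj'.2 hu.2))
    exact ⟨j, by rw [Finset.coe_cons, hj'.isLUB_insert_iff]; exact isJoin_iff_isLUB.1 hj⟩

theorem isLUB_finset_image_mul_right [DistributiveInverseSemigroup S] {Y : Finset S}
    (hY : Y.Nonempty) {j : S} (hj : IsLUB (Y : Set S) j) (c : S) :
    IsLUB ((· * c) '' (Y : Set S)) (j * c) := by
  induction hY using Finset.Nonempty.cons_induction generalizing j with
  | singleton a =>
    rw [Finset.coe_singleton] at hj ⊢
    rw [hj.unique isLUB_singleton, Set.image_singleton]
    exact isLUB_singleton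
  | cons a Y _ hY ih =>
    rw [Finset.coe_cons] at hj ⊢
    obtain ⟨j', hj'⟩ := exists_isLUB_finset_of_bddAbove hY
      ⟨j, fun b hb => hj.1 (Set.mem_insert_of_mem a hb)⟩
    have hjoin : IsLUB {a, j'} j := hj'.isLUB_insert_iff.1 hj
    have hcompat : compatible a j' := compatible_of_le (hjoin.1 (by simp)) (hjoin.1 (by simp))
    have hdistrib := DistributiveInverseSemigroup.mul_distrib_right a j' j c hcompat
      (isJoin_iff_isLUB.2 hjoin)
    rw [Set.image_insert_eq, (ih hj').isLUB_insert_iff]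
    exact isJoin_iff_isLUB.1 hdistrib

theorem mem_veeClosure_iff [InverseSemigroupWithZero S] {A : Set S} {x : S} :
    x ∈ veeClosure A ↔ ∃ Y : Finset S, Y.Nonempty ∧ ↑Y ⊆ A ∧ IsLUB (Y : Set S) x := by
  constructor
  · rintro ⟨Y, hY, hYA, -, hx⟩
    exact ⟨Y, hY, hYA, hx⟩
  · rintro ⟨Y, hY, hYA, hx⟩
    exact ⟨Y, hY, hYA, fun a ha b hb => compatible_of_le (hx.1 ha) (hx.1 hb), hx⟩

theorem isVeeClosed_veeClosure [InverseSemigroupWithZero S] (A : Set S) :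
    IsVeeClosed (veeClosure A) := by
  classical
  intro Y hY hYA _ j hj
  have hZ (y : Y) : ∃ Z : Finset S, Z.Nonempty ∧ ↑Z ⊆ A ∧ IsLUB (Z : Set S) y :=
    mem_veeClosure_iff.1 (hYA y.2)
  choose Z hZ hZA hZy using hZ
  refine mem_veeClosure_iff.2 ⟨Finset.univ.biUnion Z, ?_, ?_, ?_⟩
  · obtain ⟨y, hy⟩ := hY
    exact (hZ ⟨y, hy⟩).mono (Finset.subset_biUnion_of_mem Z (Finset.mem_univ _))
  · simpa using hZA
  · rw [Finset.coe_biUnion]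
    simpa [← isLUB_iUnion_iff_of_isLUB hZy] using isJoinSet_iff_isLUB.1 hj

theorem isOrderIdeal_veeClosure [DistributiveInverseSemigroup S] {A : Set S}
    (hA : IsOrderIdeal A) : IsOrderIdeal (veeClosure A) := by
  classical
  intro x hx y hyx
  obtain ⟨Y, hY, hYA, hx⟩ := mem_veeClosure_iff.1 hx
  obtain ⟨e, he, rfl⟩ := hyx
  refine mem_veeClosure_iff.2 ⟨Y.image (· * e), hY.image _, ?_, ?_⟩
  · simp only [Finset.coe_image, Set.image_subset_iff]
    exact fun b hb => hA b (hYA hb) _ ⟨e, he, rfl⟩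
  · rw [Finset.coe_image]
    exact isLUB_finset_image_mul_right hY hx e

end

/-- In a distributive inverse semigroup, if `A` is an order ideal then
`A^∨` is a ∨-closed order ideal. -/
theorem stmt9 {S : Type*} [DistributiveInverseSemigroup S] (A : Set S)
    (hA : IsOrderIdeal A) :
    IsOrderIdeal (veeClosure A) ∧ IsVeeClosed (veeClosure A) :=
  ⟨isOrderIdeal_veeClosure hA, isVeeClosed_veeClosure A⟩

end InvPaper
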